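/- The system B₁(x) = 0, B₂(x) = 0 has a smallest nonnegative solution q = (q₁,q₂) in [0,1]² (i.e. a solution with q ≤ x componentwise for every solution x in [0,1]²). Moreover, if ρ(1) ≤ 0 then q = (1,1), while if ρ(1) > 0 then q₁ < 1 and q₂ < 1. -/

import Mathlib

open scoped BigOperators

noncomputable def genFun (b : ℕ × ℕ → ℝ) (x : ℝ × ℝ) : ℝ :=
  ∑' j : ℕ × ℕ, b j * x.1 ^ j.1 * x.2 ^ j.2

/-- The Jacobian matrix `(B_{ij}(x))` of the generating functions, with entries
`B_{ij}(x) = ∂B_i(x)/∂x_j` written out as termwise-differentiated series. -/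
noncomputable def jacMat (b₁ b₂ : ℕ × ℕ → ℝ) (x : ℝ × ℝ) : Matrix (Fin 2) (Fin 2) ℝ :=
  !![∑' j : ℕ × ℕ, b₁ j * (j.1 : ℝ) * x.1 ^ (j.1 - 1) * x.2 ^ j.2,
     ∑' j : ℕ × ℕ, b₁ j * (j.2 : ℝ) * x.1 ^ j.1 * x.2 ^ (j.2 - 1);
     ∑' j : ℕ × ℕ, b₂ j * (j.1 : ℝ) * x.1 ^ (j.1 - 1) * x.2 ^ j.2,
     ∑' j : ℕ × ℕ, b₂ j * (j.2 : ℝ) * x.1 ^ j.1 * x.2 ^ (j.2 - 1)]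

set_option linter.unusedSectionVars false



section Aux

lemma SNR_one_sub_pow_le (x : ℝ) (hx0 : 0 ≤ x) (hx1 : x ≤ 1) (n : ℕ) :
    1 - x ^ n ≤ n * (1 - x) := by
  induction n with
  | zero => simp
  | succ n ih =>
    have hxn : x ^ n ≤ 1 := pow_le_one₀ hx0 hx1
    have hxn0 : 0 ≤ x ^ n := pow_nonneg hx0 n
    rw [pow_succ]
    push_cast
    nlinarith [mul_le_mul_of_nonneg_left ih hx0, mul_le_mul_of_nonneg_right hx1 (sub_nonneg.2 hxn)]

lemma SNR_one_sub_pow_lt (x : ℝ) (hx0 : 0 ≤ x) (hx1 : x < 1) (n : ℕ) (hn : 2 ≤ n) :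
    1 - x ^ n < n * (1 - x) := by
  induction n with
  | zero => omega
  | succ n ih =>
    rcases Nat.lt_or_ge n 2 with h2 | h2
    · interval_cases n
      · omega
      · push_cast; nlinarith
    · have h := ih h2
      have hxn : x ^ n ≤ 1 := pow_le_one₀ hx0 hx1.le
      have hxn0 : 0 ≤ x ^ n := pow_nonneg hx0 n
      rw [pow_succ]
      push_cast
      nlinarith [mul_le_mul_of_nonneg_right hx1.le (sub_nonneg.2 hxn)]

lemma SNR_key_ineq (x y : ℝ) (hx0 : 0 ≤ x) (hx1 : x ≤ 1) (hy0 : 0 ≤ y) (hy1 : y ≤ 1)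
    (a b : ℕ) : 1 - x ^ a * y ^ b ≤ a * (1 - x) + b * (1 - y) := by
  have h1 := SNR_one_sub_pow_le x hx0 hx1 a
  have h2 := SNR_one_sub_pow_le y hy0 hy1 b
  have hxa : x ^ a ≤ 1 := pow_le_one₀ hx0 hx1
  have hxa0 : 0 ≤ x ^ a := pow_nonneg hx0 a
  have hyb : y ^ b ≤ 1 := pow_le_one₀ hy0 hy1
  have hyb0 : 0 ≤ y ^ b := pow_nonneg hy0 b
  nlinarith [mul_le_mul_of_nonneg_left (sub_nonneg.2 hyb) hxa0]

lemma SNR_key_ineq_strict (x y : ℝ) (hx0 : 0 ≤ x) (hx1 : x < 1) (hy0 : 0 ≤ y) (hy1 : y < 1)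
    (a b : ℕ) (hab : 2 ≤ a + b) : 1 - x ^ a * y ^ b < a * (1 - x) + b * (1 - y) := by
  have hxa : x ^ a ≤ 1 := pow_le_one₀ hx0 hx1.le
  have hxa0 : 0 ≤ x ^ a := pow_nonneg hx0 a
  have hyb : y ^ b ≤ 1 := pow_le_one₀ hy0 hy1.le
  have hyb0 : 0 ≤ y ^ b := pow_nonneg hy0 b
  rcases Nat.lt_or_ge a 2 with ha | ha
  · rcases Nat.lt_or_ge b 2 with hb | hb
    · -- a ≤ 1, b ≤ 1, a+b ≥ 2 ⇒ a = b = 1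
      have : a = 1 ∧ b = 1 := by omega
      obtain ⟨rfl, rfl⟩ := this
      push_cast
      nlinarith
    · -- b ≥ 2
      have h2 := SNR_one_sub_pow_lt y hy0 hy1 b hb
      have h1 := SNR_one_sub_pow_le x hx0 hx1.le a
      nlinarith [mul_le_mul_of_nonneg_left (sub_nonneg.2 hyb) hxa0]
  · have h1 := SNR_one_sub_pow_lt x hx0 hx1 a ha
    have h2 := SNR_one_sub_pow_le y hy0 hy1.le b
    nlinarith [mul_le_mul_of_nonneg_left (sub_nonneg.2 hyb) hxa0]

lemma SNR_summable_ite (f : ℕ × ℕ → ℝ) (e : ℕ × ℕ) (hf : Summable f) :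
    Summable fun j => if j = e then 0 else f j := by
  have h1 : Summable fun j : ℕ × ℕ => if j = e then f j - 0 else 0 :=
    summable_of_ne_finset_zero (s := {e}) (by intro j hj; simp at hj; simp [hj])
  have := hf.sub h1
  refine this.congr fun j => ?_
  by_cases h : j = e <;> simp [h]

lemma SNR_summable_of_ite (f : ℕ × ℕ → ℝ) (e : ℕ × ℕ)
    (hf : Summable fun j => if j = e then 0 else f j) : Summable f := by
  have h1 : Summable fun j : ℕ × ℕ => if j = e then f j else 0 :=
    summable_of_ne_finset_zero (s := {e}) (by intro j hj; simp at hj; simp [hj])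
  have := hf.add h1
  convert this using 1
  funext j
  by_cases h : j = e <;> simp [h]

lemma SNR_tsum_ite (f : ℕ × ℕ → ℝ) (e : ℕ × ℕ) (hf : Summable f) :
    (∑' j, if j = e then 0 else f j) = (∑' j, f j) - f e := by
  have := Summable.tsum_eq_add_tsum_ite hf e
  linarith

end Aux


/-- tail part of the generating function: coefficient at `e` replaced by 0 -/
noncomputable def SNR_P (b : ℕ × ℕ → ℝ) (e : ℕ × ℕ) (x : ℝ × ℝ) : ℝ :=
  ∑' j : ℕ × ℕ, (if j = e then 0 else b j) * x.1 ^ j.1 * x.2 ^ j.2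

section GF

variable (b : ℕ × ℕ → ℝ) (e : ℕ × ℕ)
  (hb : ∀ j : ℕ × ℕ, j ≠ e → 0 ≤ b j)
  (hs : Summable fun j : ℕ × ℕ => if j = e then 0 else b j)

def SNR_box : Set (ℝ × ℝ) := Set.Icc ((0 : ℝ), (0 : ℝ)) (1, 1)

lemma SNR_box_mem {x : ℝ × ℝ} (hx : x ∈ SNR_box) :
    0 ≤ x.1 ∧ x.1 ≤ 1 ∧ 0 ≤ x.2 ∧ x.2 ≤ 1 := by
  obtain ⟨⟨h1, h2⟩, h3, h4⟩ := hx
  exact ⟨h1, h3, h2, h4⟩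

include hb hs in
lemma SNR_summable_P {x : ℝ × ℝ} (hx : x ∈ SNR_box) :
    Summable fun j : ℕ × ℕ => (if j = e then 0 else b j) * x.1 ^ j.1 * x.2 ^ j.2 := by
  obtain ⟨h1, h2, h3, h4⟩ := SNR_box_mem hx
  apply hs.of_nonneg_of_le
  · intro j
    by_cases h : j = e
    · simp [h]
    · simp only [h, if_neg, if_false]
      exact mul_nonneg (mul_nonneg (hb j h) (pow_nonneg h1 _)) (pow_nonneg h3 _)
  · intro j
    by_cases h : j = e
    · simp [h]
    · simp only [h, if_false]
      calc b j * x.1 ^ j.1 * x.2 ^ j.2 ≤ b j * 1 * 1 := by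
            apply mul_le_mul
            · exact mul_le_mul_of_nonneg_left (pow_le_one₀ h1 h2) (hb j h) |>.trans
                (by rw [mul_one])
            · exact pow_le_one₀ h3 h4
            · exact pow_nonneg h3 _
            · exact mul_nonneg (hb j h) (by norm_num)
        _ = b j := by ring

include hb hs in
lemma SNR_summable_gen {x : ℝ × ℝ} (hx : x ∈ SNR_box) :
    Summable fun j : ℕ × ℕ => b j * x.1 ^ j.1 * x.2 ^ j.2 := by
  apply SNR_summable_of_ite _ e
  have := SNR_summable_P b e hb hs hx
  convert this using 1
  funext j
  by_cases h : j = e <;> simp [h]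

include hb hs in
lemma SNR_genFun_split {x : ℝ × ℝ} (hx : x ∈ SNR_box) :
    genFun b x = b e * x.1 ^ e.1 * x.2 ^ e.2 + SNR_P b e x := by
  have hsum := SNR_summable_gen b e hb hs hx
  have := Summable.tsum_eq_add_tsum_ite hsum e
  rw [genFun, this, SNR_P]
  congr 1
  apply tsum_congr
  intro j
  by_cases h : j = e <;> simp [h]

include hb hs in
lemma SNR_P_nonneg {x : ℝ × ℝ} (hx : x ∈ SNR_box) : 0 ≤ SNR_P b e x := by
  obtain ⟨h1, h2, h3, h4⟩ := SNR_box_mem hx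
  apply tsum_nonneg
  intro j
  by_cases h : j = e
  · simp [h]
  · simp only [h, if_false]
    exact mul_nonneg (mul_nonneg (hb j h) (pow_nonneg h1 _)) (pow_nonneg h3 _)

include hb hs in
lemma SNR_P_mono {x y : ℝ × ℝ} (hx : x ∈ SNR_box) (hy : y ∈ SNR_box) (hxy : x ≤ y) :
    SNR_P b e x ≤ SNR_P b e y := by
  obtain ⟨hx1, hx2, hx3, hx4⟩ := SNR_box_mem hx
  obtain ⟨hy1, hy2, hy3, hy4⟩ := SNR_box_mem hy
  apply Summable.tsum_le_tsum _ (SNR_summable_P b e hb hs hx) (SNR_summable_P b e hb hs hy)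
  intro j
  by_cases h : j = e
  · simp [h]
  · simp only [h, if_false]
    have p1 : x.1 ^ j.1 ≤ y.1 ^ j.1 := pow_le_pow_left₀ hx1 hxy.1 _
    have p2 : x.2 ^ j.2 ≤ y.2 ^ j.2 := pow_le_pow_left₀ hx3 hxy.2 _
    have := hb j h
    apply mul_le_mul
    · exact mul_le_mul_of_nonneg_left p1 this
    · exact p2
    · exact pow_nonneg hx3 _
    · exact mul_nonneg this (pow_nonneg hy1 _)

include hs in
lemma SNR_P_one : SNR_P b e (1, 1) = ∑' j : ℕ × ℕ, if j = e then 0 else b j := by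
  rw [SNR_P]
  apply tsum_congr
  intro j
  by_cases h : j = e <;> simp [h]

end GF
section MatrixAux

lemma SNR_pow_entry01 (M : Matrix (Fin 2) (Fin 2) ℝ) (h : M 0 1 = 0) (m : ℕ) :
    (M ^ m) 0 1 = 0 := by
  induction m with
  | zero => simp [Matrix.one_apply]
  | succ n ih =>
    rw [pow_succ, Matrix.mul_apply, Fin.sum_univ_two, ih, h]
    ring

lemma SNR_pow_entry10 (M : Matrix (Fin 2) (Fin 2) ℝ) (h : M 1 0 = 0) (m : ℕ) :
    (M ^ m) 1 0 = 0 := by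
  induction m with
  | zero => simp [Matrix.one_apply]
  | succ n ih =>
    rw [pow_succ, Matrix.mul_apply, Fin.sum_univ_two, ih, h]
    ring

lemma SNR_pow_row0 (M : Matrix (Fin 2) (Fin 2) ℝ) (h0 : M 0 0 = 0) (h1 : M 0 1 = 0)
    (n : ℕ) (j : Fin 2) : (M ^ (n + 1)) 0 j = 0 := by
  rw [pow_succ', Matrix.mul_apply, Fin.sum_univ_two, h0, h1]
  ring

lemma SNR_pow_row1 (M : Matrix (Fin 2) (Fin 2) ℝ) (h0 : M 1 0 = 0) (h1 : M 1 1 = 0)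
    (n : ℕ) (j : Fin 2) : (M ^ (n + 1)) 1 j = 0 := by
  rw [pow_succ', Matrix.mul_apply, Fin.sum_univ_two, h0, h1]
  ring

lemma SNR_spectrum_iff (M : Matrix (Fin 2) (Fin 2) ℝ) (r : ℝ) :
    r ∈ spectrum ℝ M ↔ (r - M 0 0) * (r - M 1 1) - M 0 1 * M 1 0 = 0 := by
  rw [spectrum.mem_iff, Matrix.isUnit_iff_isUnit_det, isUnit_iff_ne_zero, not_not,
    Matrix.det_fin_two]
  simp only [Matrix.sub_apply, Matrix.algebraMap_matrix_apply]
  norm_num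

lemma SNR_perron (M : Matrix (Fin 2) (Fin 2) ℝ) (hb : 0 < M 0 1) (hc : 0 < M 1 0)
    (ρ : ℝ) (hρ : IsGreatest (spectrum ℝ M) ρ) :
    M 0 0 < ρ ∧ M 1 1 < ρ ∧ (ρ - M 0 0) * (ρ - M 1 1) = M 0 1 * M 1 0 := by
  set a := M 0 0; set d := M 1 1
  set s : ℝ := Real.sqrt ((a - d) ^ 2 + 4 * (M 0 1 * M 1 0)) with hs_def
  have hbc : 0 < M 0 1 * M 1 0 := mul_pos hb hc
  have hs0 : 0 ≤ s := Real.sqrt_nonneg _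
  have hs2 : s ^ 2 = (a - d) ^ 2 + 4 * (M 0 1 * M 1 0) := by
    rw [hs_def, Real.sq_sqrt]; positivity
  set lam : ℝ := (a + d + s) / 2 with hlam_def
  have hlam_mem : lam ∈ spectrum ℝ M := by
    rw [SNR_spectrum_iff]; nlinarith [hs2]
  have h1 : lam ≤ ρ := hρ.2 hlam_mem
  have hchar : (ρ - a) * (ρ - d) - M 0 1 * M 1 0 = 0 := (SNR_spectrum_iff M ρ).1 hρ.1
  have h2 : ρ ≤ lam := by
    by_contra hlt
    push_neg at hlt
    have h3 : 0 < ρ - lam := by linarith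
    have h4 : 0 < ρ - (a + d - s) / 2 := by linarith
    nlinarith [mul_pos h3 h4, hs2]
  have hρlam : ρ = lam := le_antisymm h2 h1
  have hsgt : a - d < s ∧ d - a < s := by
    constructor <;> nlinarith [hs2, hs0]
  refine ⟨?_, ?_, by linarith [hchar]⟩
  · rw [hρlam, hlam_def]; linarith [hsgt.2]
  · rw [hρlam, hlam_def]; linarith [hsgt.1]

lemma SNR_tsum_zero_forall (f : ℕ × ℕ → ℝ) (hf : Summable f) (hnn : ∀ j, 0 ≤ f j)
    (h : ∑' j, f j = 0) : ∀ j, f j = 0 := by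
  intro j
  refine le_antisymm ?_ (hnn j)
  calc f j ≤ ∑' i, f i := Summable.le_tsum hf j fun i _ => hnn i
    _ = 0 := h

lemma SNR_tsum_linear (f : ℕ × ℕ → ℝ) (u v : ℝ)
    (h1 : Summable fun j : ℕ × ℕ => f j * j.1) (h2 : Summable fun j : ℕ × ℕ => f j * j.2) :
    ∑' j : ℕ × ℕ, f j * (j.1 * u + j.2 * v)
      = (∑' j : ℕ × ℕ, f j * j.1) * u + (∑' j : ℕ × ℕ, f j * j.2) * v := by
  rw [← tsum_mul_right, ← tsum_mul_right, ← Summable.tsum_add (h1.mul_right u) (h2.mul_right v)]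
  apply tsum_congr; intro j; ring

end MatrixAux
section Super

lemma SNR_super (b : ℕ × ℕ → ℝ) (e : ℕ × ℕ)
    (hb : ∀ j : ℕ × ℕ, j ≠ e → 0 ≤ b j)
    (hs : Summable fun j : ℕ × ℕ => if j = e then 0 else b j)
    (u1 u2 w : ℝ) (hu1 : 0 < u1) (hu2 : 0 < u2)
    (hSm : Summable fun j : ℕ × ℕ => (if j = e then 0 else b j) * ((j.1 : ℝ) * u1 + (j.2 : ℝ) * u2))
    (hD : (∑' j : ℕ × ℕ, if j = e then 0 else b j) * w
      < ∑' j : ℕ × ℕ, (if j = e then 0 else b j) * ((j.1 : ℝ) * u1 + (j.2 : ℝ) * u2)) :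
    ∀ᶠ t in nhdsWithin 0 (Set.Ioi (0 : ℝ)),
      ((1 - t * u1, 1 - t * u2) : ℝ × ℝ) ∈ SNR_box ∧
      SNR_P b e (1 - t * u1, 1 - t * u2)
        ≤ (∑' j : ℕ × ℕ, if j = e then 0 else b j) * (1 - t * w) := by
  set a : ℕ × ℕ → ℝ := fun j => if j = e then 0 else b j with ha_def
  have ha_nn : ∀ j, 0 ≤ a j := by
    intro j
    by_cases h : j = e
    · simp [ha_def, h]
    · simpa [ha_def, h] using hb j h
  set c : ℝ := ∑' j, a j with hc_def
  -- finite approximation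
  obtain ⟨F, hF⟩ : ∃ F : Finset (ℕ × ℕ),
      c * w < ∑ j ∈ F, a j * ((j.1 : ℝ) * u1 + (j.2 : ℝ) * u2) := by
    have h := hSm.hasSum.eventually (lt_mem_nhds hD)
    exact h.exists
  set g : ℝ → ℝ := fun t => ∑ j ∈ F, a j * (1 - (1 - t * u1) ^ j.1 * (1 - t * u2) ^ j.2)
    with hg_def
  have hg0 : g 0 = 0 := by simp [hg_def]
  have hderiv : HasDerivAt g (∑ j ∈ F, a j * ((j.1 : ℝ) * u1 + (j.2 : ℝ) * u2)) 0 := by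
    apply HasDerivAt.fun_sum
    intro j _
    have h1 : HasDerivAt (fun t : ℝ => 1 - t * u1) (-u1) 0 := by
      simpa using ((hasDerivAt_id (0 : ℝ)).mul_const u1).const_sub 1
    have h2 : HasDerivAt (fun t : ℝ => 1 - t * u2) (-u2) 0 := by
      simpa using ((hasDerivAt_id (0 : ℝ)).mul_const u2).const_sub 1
    have h1p := h1.fun_pow j.1
    have h2p := h2.fun_pow j.2
    have hmul := h1p.fun_mul h2p
    have := (hmul.const_sub 1).const_mul (a j)
    refine this.congr_deriv ?_
    have e1 : (1:ℝ) - 0 * u1 = 1 := by ring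
    have e2 : (1:ℝ) - 0 * u2 = 1 := by ring
    rw [e1, e2]
    simp only [one_pow]
    ring
  have hslope := hasDerivAt_iff_tendsto_slope.1 hderiv
  have hsub : nhdsWithin (0:ℝ) (Set.Ioi 0) ≤ nhdsWithin (0:ℝ) ({0}ᶜ) :=
    nhdsWithin_mono 0 (fun x hx => ne_of_gt hx)
  have h5 : ∀ᶠ t in nhdsWithin (0:ℝ) (Set.Ioi 0), c * w < slope g 0 t :=
    (hslope.mono_left hsub).eventually (lt_mem_nhds hF)
  have h6 : ∀ᶠ t in nhdsWithin (0:ℝ) (Set.Ioi 0), t ∈ Set.Ioo 0 (min (1/u1) (1/u2)) :=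
    Ioo_mem_nhdsGT_of_mem ⟨le_refl 0, by positivity⟩
  filter_upwards [h5, h6] with t hst hIoo
  obtain ⟨ht0, htm⟩ := hIoo
  have htu1 : t * u1 < 1 := by
    have : t < 1/u1 := lt_of_lt_of_le htm (min_le_left _ _)
    rw [one_div] at this
    calc t * u1 < u1⁻¹ * u1 := by exact mul_lt_mul_of_pos_right this hu1
      _ = 1 := inv_mul_cancel₀ (ne_of_gt hu1)
  have htu2 : t * u2 < 1 := by
    have : t < 1/u2 := lt_of_lt_of_le htm (min_le_right _ _)
    rw [one_div] at this
    calc t * u2 < u2⁻¹ * u2 := by exact mul_lt_mul_of_pos_right this hu2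
      _ = 1 := inv_mul_cancel₀ (ne_of_gt hu2)
  have hbox : ((1 - t * u1, 1 - t * u2) : ℝ × ℝ) ∈ SNR_box := by
    constructor
    · constructor <;> simp only [] <;> nlinarith [mul_pos ht0 hu1, mul_pos ht0 hu2]
    · constructor <;> simp only [] <;> nlinarith [mul_pos ht0 hu1, mul_pos ht0 hu2]
  refine ⟨hbox, ?_⟩
  set x : ℝ × ℝ := (1 - t * u1, 1 - t * u2) with hx_def
  have hPsum : Summable fun j : ℕ × ℕ => a j * x.1 ^ j.1 * x.2 ^ j.2 :=
    SNR_summable_P b e hb hs hbox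
  have hdiffsum : Summable fun j : ℕ × ℕ => a j * (1 - x.1 ^ j.1 * x.2 ^ j.2) := by
    have := hs.sub hPsum
    apply this.congr
    intro j; ring
  have hkey : c - SNR_P b e x = ∑' j : ℕ × ℕ, a j * (1 - x.1 ^ j.1 * x.2 ^ j.2) := by
    rw [hc_def, SNR_P, ← Summable.tsum_sub hs hPsum]
    apply tsum_congr
    intro j; ring
  -- slope bound
  have hgt : c * w * t < g t := by
    have hsl : slope g 0 t = g t / t := by
      rw [slope_def_field, hg0]
      simp
    rw [hsl] at hst
    calc c * w * t = (c * w) * t := by ring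
      _ < (g t / t) * t := mul_lt_mul_of_pos_right hst ht0
      _ = g t := by field_simp
  -- g t ≤ tsum
  have hg_le : g t ≤ ∑' j : ℕ × ℕ, a j * (1 - x.1 ^ j.1 * x.2 ^ j.2) := by
    apply Summable.sum_le_tsum F _ hdiffsum
    intro j _
    obtain ⟨hb1, hb2, hb3, hb4⟩ := SNR_box_mem hbox
    have : x.1 ^ j.1 * x.2 ^ j.2 ≤ 1 := by
      calc x.1 ^ j.1 * x.2 ^ j.2 ≤ 1 * 1 := by
            apply mul_le_mul (pow_le_one₀ hb1 hb2) (pow_le_one₀ hb3 hb4)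
              (pow_nonneg hb3 _) (by norm_num)
        _ = 1 := by norm_num
    exact mul_nonneg (ha_nn j) (by linarith)
  have : c * w * t < c - SNR_P b e x := by
    rw [hkey]
    exact lt_of_lt_of_le hgt hg_le
  have : SNR_P b e x < c * (1 - t * w) := by nlinarith [this]
  exact this.le

end Super
set_option maxHeartbeats 2000000 in
theorem smallest_nonneg_root (b₁ b₂ : ℕ × ℕ → ℝ)
    (hb₁ : ∀ j : ℕ × ℕ, j ≠ (1, 0) → 0 ≤ b₁ j)
    (hb₂ : ∀ j : ℕ × ℕ, j ≠ (0, 1) → 0 ≤ b₂ j)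
    (hs₁ : Summable fun j : ℕ × ℕ => if j = (1, 0) then 0 else b₁ j)
    (hs₂ : Summable fun j : ℕ × ℕ => if j = (0, 1) then 0 else b₂ j)
    (he₁ : b₁ (1, 0) = -∑' j : ℕ × ℕ, if j = (1, 0) then 0 else b₁ j)
    (he₂ : b₂ (0, 1) = -∑' j : ℕ × ℕ, if j = (0, 1) then 0 else b₂ j)
    (hA2 : (Summable fun j : ℕ × ℕ => b₁ j * (j.1 : ℝ)) ∧
      (Summable fun j : ℕ × ℕ => b₁ j * (j.2 : ℝ)) ∧
      (Summable fun j : ℕ × ℕ => b₂ j * (j.1 : ℝ)) ∧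
      (Summable fun j : ℕ × ℕ => b₂ j * (j.2 : ℝ)))
    (hA1 : ¬ ∃ M : Matrix (Fin 2) (Fin 2) ℝ, ∀ x ∈ Set.Icc ((0 : ℝ), (0 : ℝ)) (1, 1),
      genFun b₁ x = x.1 * M 0 0 + x.2 * M 1 0 ∧ genFun b₂ x = x.1 * M 0 1 + x.2 * M 1 1)
    (hA3 : ∃ m : ℕ, ∀ i j : Fin 2, 0 < ((jacMat b₁ b₂ (1, 1)) ^ m) i j)
    (ρ1 : ℝ) (hρ : IsGreatest (spectrum ℝ (jacMat b₁ b₂ (1, 1))) ρ1) :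
    ∃ q : ℝ × ℝ, q ∈ Set.Icc ((0 : ℝ), (0 : ℝ)) (1, 1) ∧ genFun b₁ q = 0 ∧ genFun b₂ q = 0 ∧
      (∀ x ∈ Set.Icc ((0 : ℝ), (0 : ℝ)) (1, 1), genFun b₁ x = 0 → genFun b₂ x = 0 → q ≤ x) ∧
      (ρ1 ≤ 0 → q = (1, 1)) ∧ (0 < ρ1 → q.1 < 1 ∧ q.2 < 1) := by
  obtain ⟨hA2a, hA2b, hA2c, hA2d⟩ := hA2
  set e₁ : ℕ × ℕ := (1, 0) with he₁def
  set e₂ : ℕ × ℕ := (0, 1) with he₂def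
  set c₁ : ℝ := ∑' j : ℕ × ℕ, if j = e₁ then 0 else b₁ j with hc₁def
  set c₂ : ℝ := ∑' j : ℕ × ℕ, if j = e₂ then 0 else b₂ j with hc₂def
  set M : Matrix (Fin 2) (Fin 2) ℝ := jacMat b₁ b₂ (1, 1) with hMdef
  -- matrix entries
  have hM00 : M 0 0 = ∑' j : ℕ × ℕ, b₁ j * (j.1 : ℝ) := by
    simp [hMdef, jacMat]
  have hM01 : M 0 1 = ∑' j : ℕ × ℕ, b₁ j * (j.2 : ℝ) := by
    simp [hMdef, jacMat]
  have hM10 : M 1 0 = ∑' j : ℕ × ℕ, b₂ j * (j.1 : ℝ) := by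
    simp [hMdef, jacMat]
  have hM11 : M 1 1 = ∑' j : ℕ × ℕ, b₂ j * (j.2 : ℝ) := by
    simp [hMdef, jacMat]
  -- off-diagonal positivity
  have hm01_pos : 0 < M 0 1 := by
    rcases lt_or_eq_of_le (show 0 ≤ M 0 1 by
      rw [hM01]
      apply tsum_nonneg
      intro j
      by_cases h : j = e₁
      · subst h; simp
      · exact mul_nonneg (hb₁ j h) (by positivity)) with h | h
    · exact h
    · exfalso
      obtain ⟨m, hm⟩ := hA3
      have := hm 0 1
      rw [SNR_pow_entry01 _ h.symm m] at this
      exact lt_irrefl _ this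
  have hm10_pos : 0 < M 1 0 := by
    rcases lt_or_eq_of_le (show 0 ≤ M 1 0 by
      rw [hM10]
      apply tsum_nonneg
      intro j
      by_cases h : j = e₂
      · subst h; simp
      · exact mul_nonneg (hb₂ j h) (by positivity)) with h | h
    · exact h
    · exfalso
      obtain ⟨m, hm⟩ := hA3
      have := hm 1 0
      rw [SNR_pow_entry10 _ h.symm m] at this
      exact lt_irrefl _ this
  -- positivity of c₁, c₂
  have hc₁_nonneg : 0 ≤ c₁ := by
    rw [hc₁def]
    apply tsum_nonneg
    intro j
    by_cases h : j = e₁ <;> simp [h, hb₁ j]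
  have hc₂_nonneg : 0 ≤ c₂ := by
    rw [hc₂def]
    apply tsum_nonneg
    intro j
    by_cases h : j = e₂ <;> simp [h, hb₂ j]
  have hc₁_pos : 0 < c₁ := by
    rcases lt_or_eq_of_le hc₁_nonneg with h | h
    · exact h
    · exfalso
      have hz : ∀ j : ℕ × ℕ, (if j = e₁ then 0 else b₁ j) = 0 := by
        apply SNR_tsum_zero_forall _ hs₁
        · intro j; by_cases hj : j = e₁ <;> simp [hj, hb₁ j]
        · exact h.symm
      have : M 0 1 = 0 := by
        rw [hM01]
        have : ∀ j : ℕ × ℕ, b₁ j * (j.2 : ℝ) = 0 := by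
          intro j
          by_cases hj : j = e₁
          · subst hj; simp
          · have := hz j; simp [hj] at this; simp [this]
        simp [this]
      linarith [hm01_pos]
  have hc₂_pos : 0 < c₂ := by
    rcases lt_or_eq_of_le hc₂_nonneg with h | h
    · exact h
    · exfalso
      have hz : ∀ j : ℕ × ℕ, (if j = e₂ then 0 else b₂ j) = 0 := by
        apply SNR_tsum_zero_forall _ hs₂
        · intro j; by_cases hj : j = e₂ <;> simp [hj, hb₂ j]
        · exact h.symm
      have : M 1 0 = 0 := by
        rw [hM10]
        have : ∀ j : ℕ × ℕ, b₂ j * (j.1 : ℝ) = 0 := by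
          intro j
          by_cases hj : j = e₂
          · subst hj; simp
          · have := hz j; simp [hj] at this; simp [this]
        simp [this]
      linarith [hm10_pos]
  -- Perron root
  obtain ⟨hρa, hρd, hchar⟩ := SNR_perron M hm01_pos hm10_pos ρ1 hρ
  -- generating function split on the box
  have hsplit₁ : ∀ x ∈ SNR_box, genFun b₁ x = -c₁ * x.1 + SNR_P b₁ e₁ x := by
    intro x hx
    have := SNR_genFun_split b₁ e₁ hb₁ hs₁ hx
    rw [this, he₁, he₁def]
    norm_num
  have hsplit₂ : ∀ x ∈ SNR_box, genFun b₂ x = -c₂ * x.2 + SNR_P b₂ e₂ x := by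
    intro x hx
    have := SNR_genFun_split b₂ e₂ hb₂ hs₂ hx
    rw [this, he₂, he₂def]
    norm_num
  -- the set T
  set T : Set (ℝ × ℝ) := {x | x ∈ SNR_box ∧ SNR_P b₁ e₁ x ≤ c₁ * x.1 ∧ SNR_P b₂ e₂ x ≤ c₂ * x.2}
    with hTdef
  have hone_box : ((1 : ℝ), (1 : ℝ)) ∈ SNR_box := by
    constructor <;> constructor <;> norm_num
  have hone_T : ((1 : ℝ), (1 : ℝ)) ∈ T := by
    refine ⟨hone_box, ?_, ?_⟩
    · rw [SNR_P_one b₁ e₁ hs₁]; simp [hc₁def]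
    · rw [SNR_P_one b₂ e₂ hs₂]; simp [hc₂def]
  have hT_box : ∀ x ∈ T, x ∈ SNR_box := fun x hx => hx.1
  have hbdd1 : BddBelow (Prod.fst '' T) := by
    refine ⟨0, ?_⟩
    rintro r ⟨x, hx, rfl⟩
    exact (SNR_box_mem (hT_box x hx)).1
  have hbdd2 : BddBelow (Prod.snd '' T) := by
    refine ⟨0, ?_⟩
    rintro r ⟨x, hx, rfl⟩
    exact (SNR_box_mem (hT_box x hx)).2.2.1
  have hne1 : (Prod.fst '' T).Nonempty := ⟨1, ⟨(1, 1), hone_T, rfl⟩⟩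
  have hne2 : (Prod.snd '' T).Nonempty := ⟨1, ⟨(1, 1), hone_T, rfl⟩⟩
  set q1 : ℝ := sInf (Prod.fst '' T) with hq1def
  set q2 : ℝ := sInf (Prod.snd '' T) with hq2def
  set q : ℝ × ℝ := (q1, q2) with hqdef
  have hq_le : ∀ x ∈ T, q ≤ x := by
    intro x hx
    constructor
    · exact csInf_le hbdd1 ⟨x, hx, rfl⟩
    · exact csInf_le hbdd2 ⟨x, hx, rfl⟩
  have hq_box : q ∈ SNR_box := by
    constructor
    · constructor
      · exact le_csInf hne1 (by rintro r ⟨x, hx, rfl⟩; exact (SNR_box_mem (hT_box x hx)).1)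
      · exact le_csInf hne2 (by rintro r ⟨x, hx, rfl⟩; exact (SNR_box_mem (hT_box x hx)).2.2.1)
    · constructor
      · exact (hq_le _ hone_T).1
      · exact (hq_le _ hone_T).2
  -- q is in T
  have hq_T : q ∈ T := by
    refine ⟨hq_box, ?_, ?_⟩
    · have hlb : ∀ r ∈ Prod.fst '' T, SNR_P b₁ e₁ q / c₁ ≤ r := by
        rintro r ⟨x, hx, rfl⟩
        rw [div_le_iff₀ hc₁_pos]
        calc SNR_P b₁ e₁ q ≤ SNR_P b₁ e₁ x :=
              SNR_P_mono b₁ e₁ hb₁ hs₁ hq_box (hT_box x hx) (hq_le x hx)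
          _ ≤ c₁ * x.1 := hx.2.1
          _ = x.1 * c₁ := by ring
      have := le_csInf hne1 hlb
      rw [div_le_iff₀ hc₁_pos] at this
      calc SNR_P b₁ e₁ q ≤ q1 * c₁ := this
        _ = c₁ * q.1 := by rw [hqdef]; ring
    · have hlb : ∀ r ∈ Prod.snd '' T, SNR_P b₂ e₂ q / c₂ ≤ r := by
        rintro r ⟨x, hx, rfl⟩
        rw [div_le_iff₀ hc₂_pos]
        calc SNR_P b₂ e₂ q ≤ SNR_P b₂ e₂ x :=
              SNR_P_mono b₂ e₂ hb₂ hs₂ hq_box (hT_box x hx) (hq_le x hx)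
          _ ≤ c₂ * x.2 := hx.2.2
          _ = x.2 * c₂ := by ring
      have := le_csInf hne2 hlb
      rw [div_le_iff₀ hc₂_pos] at this
      calc SNR_P b₂ e₂ q ≤ q2 * c₂ := this
        _ = c₂ * q.2 := by rw [hqdef]; ring
  -- reverse inequality via one fixed-point iteration
  have hq_ge : c₁ * q.1 ≤ SNR_P b₁ e₁ q ∧ c₂ * q.2 ≤ SNR_P b₂ e₂ q := by
    set q' : ℝ × ℝ := (SNR_P b₁ e₁ q / c₁, SNR_P b₂ e₂ q / c₂) with hq'def
    have hP₁_nonneg := SNR_P_nonneg b₁ e₁ hb₁ hs₁ hq_box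
    have hP₂_nonneg := SNR_P_nonneg b₂ e₂ hb₂ hs₂ hq_box
    have hP₁_le : SNR_P b₁ e₁ q ≤ c₁ := by
      calc SNR_P b₁ e₁ q ≤ SNR_P b₁ e₁ (1, 1) :=
            SNR_P_mono b₁ e₁ hb₁ hs₁ hq_box hone_box hq_box.2
        _ = c₁ := by rw [SNR_P_one b₁ e₁ hs₁]
    have hP₂_le : SNR_P b₂ e₂ q ≤ c₂ := by
      calc SNR_P b₂ e₂ q ≤ SNR_P b₂ e₂ (1, 1) :=
            SNR_P_mono b₂ e₂ hb₂ hs₂ hq_box hone_box hq_box.2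
        _ = c₂ := by rw [SNR_P_one b₂ e₂ hs₂]
    have hq'_box : q' ∈ SNR_box := by
      constructor
      · constructor
        · exact div_nonneg hP₁_nonneg hc₁_nonneg
        · exact div_nonneg hP₂_nonneg hc₂_nonneg
      · constructor
        · rw [div_le_one hc₁_pos]; exact hP₁_le
        · rw [div_le_one hc₂_pos]; exact hP₂_le
    have hq'_le_q : q' ≤ q := by
      constructor
      · rw [hq'def]
        show SNR_P b₁ e₁ q / c₁ ≤ q.1
        rw [div_le_iff₀ hc₁_pos]
        calc SNR_P b₁ e₁ q ≤ c₁ * q.1 := hq_T.2.1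
          _ = q.1 * c₁ := by ring
      · rw [hq'def]
        show SNR_P b₂ e₂ q / c₂ ≤ q.2
        rw [div_le_iff₀ hc₂_pos]
        calc SNR_P b₂ e₂ q ≤ c₂ * q.2 := hq_T.2.2
          _ = q.2 * c₂ := by ring
    have hq'_T : q' ∈ T := by
      refine ⟨hq'_box, ?_, ?_⟩
      · calc SNR_P b₁ e₁ q' ≤ SNR_P b₁ e₁ q :=
              SNR_P_mono b₁ e₁ hb₁ hs₁ hq'_box hq_box hq'_le_q
          _ = c₁ * q'.1 := by
              rw [hq'def]
              show SNR_P b₁ e₁ q = c₁ * (SNR_P b₁ e₁ q / c₁)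
              field_simp
      · calc SNR_P b₂ e₂ q' ≤ SNR_P b₂ e₂ q :=
              SNR_P_mono b₂ e₂ hb₂ hs₂ hq'_box hq_box hq'_le_q
          _ = c₂ * q'.2 := by
              rw [hq'def]
              show SNR_P b₂ e₂ q = c₂ * (SNR_P b₂ e₂ q / c₂)
              field_simp
    have := hq_le q' hq'_T
    constructor
    · have h1 : q.1 ≤ SNR_P b₁ e₁ q / c₁ := this.1
      rw [le_div_iff₀ hc₁_pos] at h1
      linarith [h1]
    · have h2 : q.2 ≤ SNR_P b₂ e₂ q / c₂ := this.2
      rw [le_div_iff₀ hc₂_pos] at h2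
      linarith [h2]
  have hroot₁ : genFun b₁ q = 0 := by
    rw [hsplit₁ q hq_box]
    have := hq_T.2.1
    have := hq_ge.1
    linarith
  have hroot₂ : genFun b₂ q = 0 := by
    rw [hsplit₂ q hq_box]
    have := hq_T.2.2
    have := hq_ge.2
    linarith
  have hmin : ∀ x ∈ SNR_box, genFun b₁ x = 0 → genFun b₂ x = 0 → q ≤ x := by
    intro x hx h1 h2
    apply hq_le
    refine ⟨hx, ?_, ?_⟩
    · rw [hsplit₁ x hx] at h1; linarith
    · rw [hsplit₂ x hx] at h2; linarith
    -- moment summability and values for the "ite" coefficients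
  have hIte1a : Summable fun j : ℕ × ℕ => (if j = e₁ then 0 else b₁ j) * (j.1 : ℝ) := by
    apply (SNR_summable_ite (fun j => b₁ j * (j.1 : ℝ)) e₁ hA2a).congr
    intro j; by_cases h : j = e₁ <;> simp [h]
  have hIte1b : Summable fun j : ℕ × ℕ => (if j = e₁ then 0 else b₁ j) * (j.2 : ℝ) := by
    apply (SNR_summable_ite (fun j => b₁ j * (j.2 : ℝ)) e₁ hA2b).congr
    intro j; by_cases h : j = e₁ <;> simp [h]
  have hIte2a : Summable fun j : ℕ × ℕ => (if j = e₂ then 0 else b₂ j) * (j.1 : ℝ) := by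
    apply (SNR_summable_ite (fun j => b₂ j * (j.1 : ℝ)) e₂ hA2c).congr
    intro j; by_cases h : j = e₂ <;> simp [h]
  have hIte2b : Summable fun j : ℕ × ℕ => (if j = e₂ then 0 else b₂ j) * (j.2 : ℝ) := by
    apply (SNR_summable_ite (fun j => b₂ j * (j.2 : ℝ)) e₂ hA2d).congr
    intro j; by_cases h : j = e₂ <;> simp [h]
  have hT1a : ∑' j : ℕ × ℕ, (if j = e₁ then 0 else b₁ j) * (j.1 : ℝ) = M 0 0 + c₁ := by
    have h := SNR_tsum_ite (fun j => b₁ j * (j.1 : ℝ)) e₁ hA2a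
    have hcong : (∑' j : ℕ × ℕ, (if j = e₁ then 0 else b₁ j) * (j.1 : ℝ))
        = ∑' j : ℕ × ℕ, (if j = e₁ then 0 else b₁ j * (j.1 : ℝ)) := by
      apply tsum_congr; intro j; by_cases hj : j = e₁ <;> simp [hj]
    rw [hcong, h, ← hM00]
    show M 0 0 - b₁ e₁ * (e₁.1 : ℝ) = M 0 0 + c₁
    rw [he₁, he₁def]
    norm_num
  have hT1b : ∑' j : ℕ × ℕ, (if j = e₁ then 0 else b₁ j) * (j.2 : ℝ) = M 0 1 := by
    have h := SNR_tsum_ite (fun j => b₁ j * (j.2 : ℝ)) e₁ hA2b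
    have hcong : (∑' j : ℕ × ℕ, (if j = e₁ then 0 else b₁ j) * (j.2 : ℝ))
        = ∑' j : ℕ × ℕ, (if j = e₁ then 0 else b₁ j * (j.2 : ℝ)) := by
      apply tsum_congr; intro j; by_cases hj : j = e₁ <;> simp [hj]
    rw [hcong, h, ← hM01]
    show M 0 1 - b₁ e₁ * (e₁.2 : ℝ) = M 0 1
    rw [he₁def]
    norm_num
  have hT2a : ∑' j : ℕ × ℕ, (if j = e₂ then 0 else b₂ j) * (j.1 : ℝ) = M 1 0 := by
    have h := SNR_tsum_ite (fun j => b₂ j * (j.1 : ℝ)) e₂ hA2c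
    have hcong : (∑' j : ℕ × ℕ, (if j = e₂ then 0 else b₂ j) * (j.1 : ℝ))
        = ∑' j : ℕ × ℕ, (if j = e₂ then 0 else b₂ j * (j.1 : ℝ)) := by
      apply tsum_congr; intro j; by_cases hj : j = e₂ <;> simp [hj]
    rw [hcong, h, ← hM10]
    show M 1 0 - b₂ e₂ * (e₂.1 : ℝ) = M 1 0
    rw [he₂def]
    norm_num
  have hT2b : ∑' j : ℕ × ℕ, (if j = e₂ then 0 else b₂ j) * (j.2 : ℝ) = M 1 1 + c₂ := by
    have h := SNR_tsum_ite (fun j => b₂ j * (j.2 : ℝ)) e₂ hA2d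
    have hcong : (∑' j : ℕ × ℕ, (if j = e₂ then 0 else b₂ j) * (j.2 : ℝ))
        = ∑' j : ℕ × ℕ, (if j = e₂ then 0 else b₂ j * (j.2 : ℝ)) := by
      apply tsum_congr; intro j; by_cases hj : j = e₂ <;> simp [hj]
    rw [hcong, h, ← hM11]
    show M 1 1 - b₂ e₂ * (e₂.2 : ℝ) = M 1 1 + c₂
    rw [he₂, he₂def]
    norm_num
  have hSm1 : ∀ v1 v2 : ℝ, Summable fun j : ℕ × ℕ =>
      (if j = e₁ then 0 else b₁ j) * ((j.1 : ℝ) * v1 + (j.2 : ℝ) * v2) := by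
    intro v1 v2
    apply ((hIte1a.mul_right v1).add (hIte1b.mul_right v2)).congr
    intro j; ring
  have hSm2 : ∀ v1 v2 : ℝ, Summable fun j : ℕ × ℕ =>
      (if j = e₂ then 0 else b₂ j) * ((j.1 : ℝ) * v1 + (j.2 : ℝ) * v2) := by
    intro v1 v2
    apply ((hIte2a.mul_right v1).add (hIte2b.mul_right v2)).congr
    intro j; ring
  have hLin1 : ∀ v1 v2 : ℝ, ∑' j : ℕ × ℕ,
      (if j = e₁ then 0 else b₁ j) * ((j.1 : ℝ) * v1 + (j.2 : ℝ) * v2)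
      = (M 0 0 + c₁) * v1 + M 0 1 * v2 := by
    intro v1 v2
    rw [SNR_tsum_linear _ v1 v2 hIte1a hIte1b, hT1a, hT1b]
  have hLin2 : ∀ v1 v2 : ℝ, ∑' j : ℕ × ℕ,
      (if j = e₂ then 0 else b₂ j) * ((j.1 : ℝ) * v1 + (j.2 : ℝ) * v2)
      = M 1 0 * v1 + (M 1 1 + c₂) * v2 := by
    intro v1 v2
    rw [SNR_tsum_linear _ v1 v2 hIte2a hIte2b, hT2a, hT2b]
  -- supercritical case
  have hsuper : 0 < ρ1 → q.1 < 1 ∧ q.2 < 1 := by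
    intro hρpos
    have hu1 : 0 < M 0 1 := hm01_pos
    have hu2 : 0 < ρ1 - M 0 0 := by linarith only [hρa]
    have hD1 : (∑' j : ℕ × ℕ, if j = e₁ then 0 else b₁ j) * M 0 1
        < ∑' j : ℕ × ℕ, (if j = e₁ then 0 else b₁ j)
          * ((j.1 : ℝ) * M 0 1 + (j.2 : ℝ) * (ρ1 - M 0 0)) := by
      rw [hLin1, ← hc₁def]
      nlinarith only [mul_pos hρpos hu1]
    have hD2 : (∑' j : ℕ × ℕ, if j = e₂ then 0 else b₂ j) * (ρ1 - M 0 0)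
        < ∑' j : ℕ × ℕ, (if j = e₂ then 0 else b₂ j)
          * ((j.1 : ℝ) * M 0 1 + (j.2 : ℝ) * (ρ1 - M 0 0)) := by
      rw [hLin2, ← hc₂def]
      nlinarith only [mul_pos hρpos hu2, hchar]
    have hE1 := SNR_super b₁ e₁ hb₁ hs₁ (M 0 1) (ρ1 - M 0 0) (M 0 1) hu1 hu2
      (hSm1 _ _) hD1
    have hE2 := SNR_super b₂ e₂ hb₂ hs₂ (M 0 1) (ρ1 - M 0 0) (ρ1 - M 0 0) hu1 hu2
      (hSm2 _ _) hD2
    obtain ⟨t, ⟨⟨hbx, hP1⟩, ⟨_, hP2⟩⟩, ht0⟩ :=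
      ((hE1.and hE2).and eventually_mem_nhdsWithin).exists
    have ht0' : (0 : ℝ) < t := ht0
    rw [← hc₁def] at hP1
    rw [← hc₂def] at hP2
    have hxT : ((1 - t * M 0 1, 1 - t * (ρ1 - M 0 0)) : ℝ × ℝ) ∈ T :=
      ⟨hbx, by simpa using hP1, by simpa using hP2⟩
    have hle := hq_le _ hxT
    constructor
    · calc q.1 ≤ 1 - t * M 0 1 := hle.1
        _ < 1 := by nlinarith only [mul_pos ht0' hu1]
    · calc q.2 ≤ 1 - t * (ρ1 - M 0 0) := hle.2
        _ < 1 := by nlinarith only [mul_pos ht0' hu2]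
  -- subcritical case
  have hsubcrit : ρ1 ≤ 0 → q = (1, 1) := by
    intro hρle
    obtain ⟨hq01, hq11, hq02, hq12⟩ := SNR_box_mem hq_box
    have hv1_nonneg : 0 ≤ 1 - q.1 := by linarith only [hq11]
    have hv2_nonneg : 0 ≤ 1 - q.2 := by linarith only [hq12]
    have hPq1 : SNR_P b₁ e₁ q = c₁ * q.1 := le_antisymm hq_T.2.1 hq_ge.1
    have hPq2 : SNR_P b₂ e₂ q = c₂ * q.2 := le_antisymm hq_T.2.2 hq_ge.2
    have hPsum1 : Summable fun j : ℕ × ℕ => (if j = e₁ then 0 else b₁ j) * q.1 ^ j.1 * q.2 ^ j.2 :=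
      SNR_summable_P b₁ e₁ hb₁ hs₁ hq_box
    have hPsum2 : Summable fun j : ℕ × ℕ => (if j = e₂ then 0 else b₂ j) * q.1 ^ j.1 * q.2 ^ j.2 :=
      SNR_summable_P b₂ e₂ hb₂ hs₂ hq_box
    have hdiff1 : Summable fun j : ℕ × ℕ =>
        (if j = e₁ then 0 else b₁ j) * (1 - q.1 ^ j.1 * q.2 ^ j.2) := by
      apply (hs₁.sub hPsum1).congr
      intro j; ring
    have hdiff2 : Summable fun j : ℕ × ℕ =>
        (if j = e₂ then 0 else b₂ j) * (1 - q.1 ^ j.1 * q.2 ^ j.2) := by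
      apply (hs₂.sub hPsum2).congr
      intro j; ring
    have hkey1 : (∑' j : ℕ × ℕ, (if j = e₁ then 0 else b₁ j) * (1 - q.1 ^ j.1 * q.2 ^ j.2))
        = c₁ * (1 - q.1) := by
      have h1 : (∑' j : ℕ × ℕ, (if j = e₁ then 0 else b₁ j) * (1 - q.1 ^ j.1 * q.2 ^ j.2))
          = ∑' j : ℕ × ℕ, ((if j = e₁ then 0 else b₁ j)
            - (if j = e₁ then 0 else b₁ j) * q.1 ^ j.1 * q.2 ^ j.2) :=
        tsum_congr fun j => by ring
      rw [h1, Summable.tsum_sub hs₁ hPsum1, ← hc₁def]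
      have h2 : (∑' j : ℕ × ℕ, (if j = e₁ then 0 else b₁ j) * q.1 ^ j.1 * q.2 ^ j.2)
          = SNR_P b₁ e₁ q := rfl
      rw [h2, hPq1]; ring
    have hkey2 : (∑' j : ℕ × ℕ, (if j = e₂ then 0 else b₂ j) * (1 - q.1 ^ j.1 * q.2 ^ j.2))
        = c₂ * (1 - q.2) := by
      have h1 : (∑' j : ℕ × ℕ, (if j = e₂ then 0 else b₂ j) * (1 - q.1 ^ j.1 * q.2 ^ j.2))
          = ∑' j : ℕ × ℕ, ((if j = e₂ then 0 else b₂ j)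
            - (if j = e₂ then 0 else b₂ j) * q.1 ^ j.1 * q.2 ^ j.2) :=
        tsum_congr fun j => by ring
      rw [h1, Summable.tsum_sub hs₂ hPsum2, ← hc₂def]
      have h2 : (∑' j : ℕ × ℕ, (if j = e₂ then 0 else b₂ j) * q.1 ^ j.1 * q.2 ^ j.2)
          = SNR_P b₂ e₂ q := rfl
      rw [h2, hPq2]; ring
    have hineq1 : c₁ * (1 - q.1) ≤ (M 0 0 + c₁) * (1 - q.1) + M 0 1 * (1 - q.2) := by
      rw [← hkey1, ← hLin1 (1 - q.1) (1 - q.2)]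
      apply Summable.tsum_le_tsum _ hdiff1 (hSm1 _ _)
      intro j
      by_cases hj : j = e₁
      · simp [hj]
      · simp only [hj, if_false]
        exact mul_le_mul_of_nonneg_left
          (SNR_key_ineq q.1 q.2 hq01 hq11 hq02 hq12 j.1 j.2) (hb₁ j hj)
    have hineq2 : c₂ * (1 - q.2) ≤ M 1 0 * (1 - q.1) + (M 1 1 + c₂) * (1 - q.2) := by
      rw [← hkey2, ← hLin2 (1 - q.1) (1 - q.2)]
      apply Summable.tsum_le_tsum _ hdiff2 (hSm2 _ _)
      intro j
      by_cases hj : j = e₂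
      · simp [hj]
      · simp only [hj, if_false]
        exact mul_le_mul_of_nonneg_left
          (SNR_key_ineq q.1 q.2 hq01 hq11 hq02 hq12 j.1 j.2) (hb₂ j hj)
    have hr1 : 0 ≤ M 0 0 * (1 - q.1) + M 0 1 * (1 - q.2) := by linarith only [hineq1]
    have hr2 : 0 ≤ M 1 0 * (1 - q.1) + M 1 1 * (1 - q.2) := by linarith only [hineq2]
    have hw1 : 0 < M 1 0 := hm10_pos
    have hw2 : 0 < ρ1 - M 0 0 := by linarith only [hρa]
    have hcomb : M 1 0 * (M 0 0 * (1 - q.1) + M 0 1 * (1 - q.2))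
        + (ρ1 - M 0 0) * (M 1 0 * (1 - q.1) + M 1 1 * (1 - q.2))
        = ρ1 * (M 1 0 * (1 - q.1) + (ρ1 - M 0 0) * (1 - q.2)) := by
      linear_combination (q.2 - 1) * hchar
    have hwv : 0 ≤ M 1 0 * (1 - q.1) + (ρ1 - M 0 0) * (1 - q.2) :=
      add_nonneg (mul_nonneg hw1.le hv1_nonneg) (mul_nonneg hw2.le hv2_nonneg)
    have hcombo0 : M 1 0 * (M 0 0 * (1 - q.1) + M 0 1 * (1 - q.2))
        + (ρ1 - M 0 0) * (M 1 0 * (1 - q.1) + M 1 1 * (1 - q.2)) = 0 := by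
      have hA : 0 ≤ M 1 0 * (M 0 0 * (1 - q.1) + M 0 1 * (1 - q.2))
          + (ρ1 - M 0 0) * (M 1 0 * (1 - q.1) + M 1 1 * (1 - q.2)) :=
        add_nonneg (mul_nonneg hw1.le hr1) (mul_nonneg hw2.le hr2)
      have hC : ρ1 * (M 1 0 * (1 - q.1) + (ρ1 - M 0 0) * (1 - q.2)) ≤ 0 := by
        linarith only [mul_nonneg (neg_nonneg.2 hρle) hwv]
      linarith only [hcomb, hA, hC]
    have hr1eq : M 0 0 * (1 - q.1) + M 0 1 * (1 - q.2) = 0 := by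
      refine le_antisymm ?_ hr1
      by_contra h
      push_neg at h
      linarith only [hcombo0, mul_pos hw1 h, mul_nonneg hw2.le hr2]
    have hr2eq : M 1 0 * (1 - q.1) + M 1 1 * (1 - q.2) = 0 := by
      refine le_antisymm ?_ hr2
      by_contra h
      push_neg at h
      linarith only [hcombo0, mul_pos hw2 h, mul_nonneg hw1.le hr1]
    -- show v = 0, else contradiction with (A-1)
    by_cases hv : (1 - q.1 = 0) ∧ (1 - q.2 = 0)
    · have h1 : q.1 = 1 := by linarith only [hv.1]
      have h2 : q.2 = 1 := by linarith only [hv.2]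
      rw [hqdef]
      rw [hqdef] at h1 h2
      simp only at h1 h2
      rw [Prod.ext_iff]
      exact ⟨h1, h2⟩
    · exfalso
      -- both components of v are positive
      have hvpos : 0 < 1 - q.1 ∧ 0 < 1 - q.2 := by
        rcases not_and_or.1 hv with h | h
        · have hv1 : 0 < 1 - q.1 := lt_of_le_of_ne hv1_nonneg (Ne.symm h)
          refine ⟨hv1, ?_⟩
          rcases eq_or_lt_of_le hv2_nonneg with h2 | h2
          · exfalso
            rw [← h2] at hr2eq
            linarith only [hr2eq, mul_pos hw1 hv1]
          · exact h2
        · have hv2 : 0 < 1 - q.2 := lt_of_le_of_ne hv2_nonneg (Ne.symm h)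
          refine ⟨?_, hv2⟩
          rcases eq_or_lt_of_le hv1_nonneg with h1 | h1
          · exfalso
            rw [← h1] at hr1eq
            linarith only [hr1eq, mul_pos hm01_pos hv2]
          · exact h1
      obtain ⟨hv1pos, hv2pos⟩ := hvpos
      have hq1lt : q.1 < 1 := by linarith only [hv1pos]
      have hq2lt : q.2 < 1 := by linarith only [hv2pos]
      -- termwise equality forces small support
      have hzsum1 : (∑' j : ℕ × ℕ, (if j = e₁ then 0 else b₁ j)
          * (((j.1 : ℝ) * (1 - q.1) + (j.2 : ℝ) * (1 - q.2)) - (1 - q.1 ^ j.1 * q.2 ^ j.2))) = 0 := by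
        have h1 : (∑' j : ℕ × ℕ, (if j = e₁ then 0 else b₁ j)
            * (((j.1 : ℝ) * (1 - q.1) + (j.2 : ℝ) * (1 - q.2)) - (1 - q.1 ^ j.1 * q.2 ^ j.2)))
            = ∑' j : ℕ × ℕ, ((if j = e₁ then 0 else b₁ j) * ((j.1 : ℝ) * (1 - q.1) + (j.2 : ℝ) * (1 - q.2))
              - (if j = e₁ then 0 else b₁ j) * (1 - q.1 ^ j.1 * q.2 ^ j.2)) :=
          tsum_congr fun j => by ring
        rw [h1, Summable.tsum_sub (hSm1 _ _) hdiff1, hLin1, hkey1]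
        linarith only [hr1eq]
      have hzsum2 : (∑' j : ℕ × ℕ, (if j = e₂ then 0 else b₂ j)
          * (((j.1 : ℝ) * (1 - q.1) + (j.2 : ℝ) * (1 - q.2)) - (1 - q.1 ^ j.1 * q.2 ^ j.2))) = 0 := by
        have h1 : (∑' j : ℕ × ℕ, (if j = e₂ then 0 else b₂ j)
            * (((j.1 : ℝ) * (1 - q.1) + (j.2 : ℝ) * (1 - q.2)) - (1 - q.1 ^ j.1 * q.2 ^ j.2)))
            = ∑' j : ℕ × ℕ, ((if j = e₂ then 0 else b₂ j) * ((j.1 : ℝ) * (1 - q.1) + (j.2 : ℝ) * (1 - q.2))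
              - (if j = e₂ then 0 else b₂ j) * (1 - q.1 ^ j.1 * q.2 ^ j.2)) :=
          tsum_congr fun j => by ring
        rw [h1, Summable.tsum_sub (hSm2 _ _) hdiff2, hLin2, hkey2]
        linarith only [hr2eq]
      have hterm1 := SNR_tsum_zero_forall _
        (((hSm1 (1 - q.1) (1 - q.2)).sub hdiff1).congr (fun j => by ring))
        (fun j => by
          by_cases hj : j = e₁
          · simp [hj]
          · simp only [hj, if_false]
            exact mul_nonneg (hb₁ j hj)
              (by linarith [SNR_key_ineq q.1 q.2 hq01 hq11 hq02 hq12 j.1 j.2]))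
        hzsum1
      have hterm2 := SNR_tsum_zero_forall _
        (((hSm2 (1 - q.1) (1 - q.2)).sub hdiff2).congr (fun j => by ring))
        (fun j => by
          by_cases hj : j = e₂
          · simp [hj]
          · simp only [hj, if_false]
            exact mul_nonneg (hb₂ j hj)
              (by linarith [SNR_key_ineq q.1 q.2 hq01 hq11 hq02 hq12 j.1 j.2]))
        hzsum2
      have hsupp1 : ∀ j : ℕ × ℕ, 2 ≤ j.1 + j.2 → b₁ j = 0 := by
        intro j hj
        have hne : j ≠ e₁ := by
          rw [he₁def]; intro h; subst h; simp at hj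
        have h := hterm1 j
        simp only [hne, if_false] at h
        have hstrict := SNR_key_ineq_strict q.1 q.2 hq01 hq1lt hq02 hq2lt j.1 j.2 hj
        rcases mul_eq_zero.1 h with h' | h'
        · exact h'
        · exfalso; linarith only [hstrict, h']
      have hsupp2 : ∀ j : ℕ × ℕ, 2 ≤ j.1 + j.2 → b₂ j = 0 := by
        intro j hj
        have hne : j ≠ e₂ := by
          rw [he₂def]; intro h; subst h; simp at hj
        have h := hterm2 j
        simp only [hne, if_false] at h
        have hstrict := SNR_key_ineq_strict q.1 q.2 hq01 hq1lt hq02 hq2lt j.1 j.2 hj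
        rcases mul_eq_zero.1 h with h' | h'
        · exact h'
        · exfalso; linarith only [hstrict, h']
      -- the generating functions are affine-linear
      set s3 : Finset (ℕ × ℕ) := {(0, 0), (1, 0), (0, 1)} with hs3def
      have hnotin : ∀ j : ℕ × ℕ, j ∉ s3 → 2 ≤ j.1 + j.2 := by
        rintro ⟨a, b⟩ hj
        simp only [hs3def, Finset.mem_insert, Finset.mem_singleton, Prod.mk.injEq] at hj
        push_neg at hj
        show 2 ≤ a + b
        omega
      have hgen1 : ∀ x : ℝ × ℝ, genFun b₁ x = b₁ (0, 0) + b₁ (1, 0) * x.1 + b₁ (0, 1) * x.2 := by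
        intro x
        rw [genFun, tsum_eq_sum (s := s3)
          (fun j hj => by rw [hsupp1 j (hnotin j hj)]; ring)]
        rw [hs3def]
        rw [Finset.sum_insert (by decide), Finset.sum_insert (by decide), Finset.sum_singleton]
        norm_num
        ring
      have hgen2 : ∀ x : ℝ × ℝ, genFun b₂ x = b₂ (0, 0) + b₂ (1, 0) * x.1 + b₂ (0, 1) * x.2 := by
        intro x
        rw [genFun, tsum_eq_sum (s := s3)
          (fun j hj => by rw [hsupp2 j (hnotin j hj)]; ring)]
        rw [hs3def]
        rw [Finset.sum_insert (by decide), Finset.sum_insert (by decide), Finset.sum_singleton]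
        norm_num
        ring
      have hM00v : M 0 0 = b₁ (1, 0) := by
        rw [hM00, tsum_eq_sum (s := s3)
          (fun j hj => by rw [hsupp1 j (hnotin j hj)]; ring)]
        rw [hs3def]
        rw [Finset.sum_insert (by decide), Finset.sum_insert (by decide), Finset.sum_singleton]
        norm_num
      have hM01v : M 0 1 = b₁ (0, 1) := by
        rw [hM01, tsum_eq_sum (s := s3)
          (fun j hj => by rw [hsupp1 j (hnotin j hj)]; ring)]
        rw [hs3def]
        rw [Finset.sum_insert (by decide), Finset.sum_insert (by decide), Finset.sum_singleton]
        norm_num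
      have hM10v : M 1 0 = b₂ (1, 0) := by
        rw [hM10, tsum_eq_sum (s := s3)
          (fun j hj => by rw [hsupp2 j (hnotin j hj)]; ring)]
        rw [hs3def]
        rw [Finset.sum_insert (by decide), Finset.sum_insert (by decide), Finset.sum_singleton]
        norm_num
      have hM11v : M 1 1 = b₂ (0, 1) := by
        rw [hM11, tsum_eq_sum (s := s3)
          (fun j hj => by rw [hsupp2 j (hnotin j hj)]; ring)]
        rw [hs3def]
        rw [Finset.sum_insert (by decide), Finset.sum_insert (by decide), Finset.sum_singleton]
        norm_num
      have hc₁v : c₁ = b₁ (0, 0) + b₁ (0, 1) := by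
        rw [hc₁def, tsum_eq_sum (s := s3)
          (fun j hj => by
            have hne : j ≠ e₁ := by
              rw [he₁def]; intro h; subst h
              exact hj (by rw [hs3def]; decide)
            rw [if_neg hne, hsupp1 j (hnotin j hj)])]
        rw [hs3def]
        rw [Finset.sum_insert (by decide), Finset.sum_insert (by decide), Finset.sum_singleton]
        rw [he₁def]
        rw [if_neg (by decide), if_pos rfl, if_neg (by decide)]
        ring
      have hc₂v : c₂ = b₂ (0, 0) + b₂ (1, 0) := by
        rw [hc₂def, tsum_eq_sum (s := s3)
          (fun j hj => by
            have hne : j ≠ e₂ := by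
              rw [he₂def]; intro h; subst h
              exact hj (by rw [hs3def]; decide)
            rw [if_neg hne, hsupp2 j (hnotin j hj)])]
        rw [hs3def]
        rw [Finset.sum_insert (by decide), Finset.sum_insert (by decide), Finset.sum_singleton]
        rw [he₂def]
        rw [if_neg (by decide), if_neg (by decide), if_pos rfl]
        ring
      have hb1e : b₁ (1, 0) = -(b₁ (0, 0) + b₁ (0, 1)) := by
        have := he₁
        rw [he₁def] at this
        rw [this, hc₁v]
      have hb2e : b₂ (0, 1) = -(b₂ (0, 0) + b₂ (1, 0)) := by
        have := he₂
        rw [he₂def] at this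
        rw [this, hc₂v]
      have heqA : (b₁ (0, 0) + b₁ (0, 1)) * (1 - q.1) = b₁ (0, 1) * (1 - q.2) := by
        rw [hM00v, hM01v, hb1e] at hr1eq
        linarith only [hr1eq]
      have heqB : (b₂ (0, 0) + b₂ (1, 0)) * (1 - q.2) = b₂ (1, 0) * (1 - q.1) := by
        rw [hM10v, hM11v, hb2e] at hr2eq
        linarith only [hr2eq]
      have hp1 : 0 < b₁ (0, 1) := by rw [← hM01v]; exact hm01_pos
      have hp2 : 0 < b₂ (1, 0) := by rw [← hM10v]; exact hm10_pos
      have h00a : 0 ≤ b₁ (0, 0) := hb₁ _ (by rw [he₁def]; decide)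
      have h00b : 0 ≤ b₂ (0, 0) := hb₂ _ (by rw [he₂def]; decide)
      have hprod : ((b₁ (0, 0) + b₁ (0, 1)) * (b₂ (0, 0) + b₂ (1, 0))) * ((1 - q.1) * (1 - q.2))
          = (b₁ (0, 1) * b₂ (1, 0)) * ((1 - q.1) * (1 - q.2)) := by
        calc ((b₁ (0, 0) + b₁ (0, 1)) * (b₂ (0, 0) + b₂ (1, 0))) * ((1 - q.1) * (1 - q.2))
            = ((b₁ (0, 0) + b₁ (0, 1)) * (1 - q.1)) * ((b₂ (0, 0) + b₂ (1, 0)) * (1 - q.2)) := by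
              ring
          _ = (b₁ (0, 1) * (1 - q.2)) * (b₂ (1, 0) * (1 - q.1)) := by rw [heqA, heqB]
          _ = (b₁ (0, 1) * b₂ (1, 0)) * ((1 - q.1) * (1 - q.2)) := by ring
      have hcancel : (b₁ (0, 0) + b₁ (0, 1)) * (b₂ (0, 0) + b₂ (1, 0))
          = b₁ (0, 1) * b₂ (1, 0) :=
        mul_right_cancel₀ (ne_of_gt (mul_pos hv1pos hv2pos)) hprod
      have hsum0 : b₁ (0, 0) * b₂ (0, 0) + b₁ (0, 0) * b₂ (1, 0) + b₁ (0, 1) * b₂ (0, 0) = 0 := by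
        linear_combination hcancel
      have ht1 : b₁ (0, 0) * b₂ (1, 0) = 0 := by
        linarith only [hsum0, mul_nonneg h00a h00b, mul_nonneg h00a hp2.le, mul_nonneg hp1.le h00b]
      have ht2 : b₁ (0, 1) * b₂ (0, 0) = 0 := by
        linarith only [hsum0, mul_nonneg h00a h00b, mul_nonneg h00a hp2.le, mul_nonneg hp1.le h00b]
      have hb100 : b₁ (0, 0) = 0 := by
        rcases mul_eq_zero.1 ht1 with h | h
        · exact h
        · exfalso; linarith only [hp2, h]
      have hb200 : b₂ (0, 0) = 0 := by
        rcases mul_eq_zero.1 ht2 with h | h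
        · exfalso; linarith only [hp1, h]
        · exact h
      apply hA1
      refine ⟨!![b₁ (1, 0), b₂ (1, 0); b₁ (0, 1), b₂ (0, 1)], ?_⟩
      intro x _
      constructor
      · rw [hgen1 x, hb100]
        simp [Matrix.cons_val_zero, Matrix.cons_val_one]
        ring
      · rw [hgen2 x, hb200]
        simp [Matrix.cons_val_zero, Matrix.cons_val_one]
        ring
  exact ⟨q, hq_box, hroot₁, hroot₂, hmin, hsubcrit, hsuper⟩
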